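/- arXiv:2309.09931 — 2 statements merged into one kernel-verified Lean document; each statement's English description precedes it below -/
import Mathlib

section
/- If a ground term t over {d, e, +, ·} is a sum of terms u_1, u_2, …, u_k (in any parenthesization) and t ≡ e in the equational theory E = {x+e=x, e+x=x, (x+y)+z=x+(y+z), (x+y)·z=y·(x·z), (d·x)·y=x·(y+x), e·x=x, d·e=e}, then u_i ≡ e for every i. -/
/-- Ground terms over constants d, e with binary operations + (add) and · (app). -/
inductive Tm : Type
  | d : Tm
  | e : Tm
  | add : Tm → Tm → Tm
  | app : Tm → Tm → Tm
  deriving DecidableEq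

open Tm

/-- Root rewrite steps: instances of the oriented rules. -/
inductive Root : Tm → Tm → Prop
  | addE (x) : Root (add x e) x
  | eAdd (x) : Root (add e x) x
  | assoc (x y z) : Root (add (add x y) z) (add x (add y z))
  | appAdd (x y z) : Root (app (add x y) z) (app y (app x z))
  | appD (x y) : Root (app (app d x) y) (app x (add y x))
  | appE (x) : Root (app e x) x
  | dE : Root (app d e) e

/-- One rewrite step: a root step applied at some subterm position. -/
inductive Step : Tm → Tm → Prop
  | root {t u} : Root t u → Step t u
  | addL {t t' u} : Step t t' → Step (add t u) (add t' u)
  | addR {t u u'} : Step u u' → Step (add t u) (add t u')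
  | appL {t t' u} : Step t t' → Step (app t u) (app t' u)
  | appR {t u u'} : Step u u' → Step (app t u) (app t u')

/-- Zero or more rewrite steps. -/
def Steps : Tm → Tm → Prop := Relation.ReflTransGen Step

/-- A normal form is a term to which no rule applies. -/
def NormalForm (t : Tm) : Prop := ∀ u, ¬ Step t u

/-- Provable equality in the equational theory (reflexive symmetric transitive
congruence closure of the rule instances). -/
def TermEq : Tm → Tm → Prop := Relation.EqvGen Step

/-- `SumOf t l` means that `t` is a sum (in some parenthesization) of the
terms in the list `l`. -/
inductive SumOf : Tm → List Tm → Prop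
  | single (t) : SumOf t [t]
  | node {a b la lb} : SumOf a la → SumOf b lb → SumOf (add a b) (la ++ lb)

/-!
Normal forms for the rules oriented left to right can be computed directly: `nf` evaluates a term
bottom-up, with `nfAdd` and `nfApp` performing `+` and `·` on normal forms (a normal sum is a
right-nested sum of non-`e` atoms). Every rule preserves `nf`, and every term rewrites to its `nf`,
so `nf` is a complete invariant for `≡`. A normal sum is `e` only when both summands are: the rules
for `+` can absorb `e` but never produce it.
-/

namespace Tm

def nfAdd : Tm → Tm → Tm
  | e, y => y
  | add a b, y => add a (nfAdd b y)
  | x, y => if y = e then x else add x y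

def nfApp : Tm → Tm → Tm
  | e, y => y
  | add a b, y => nfApp b (nfApp a y)
  | app d a, y => nfApp a (nfAdd y a)
  | d, y => if y = e then e else app d y
  | x, y => app x y

def nf : Tm → Tm
  | d => d
  | e => e
  | add a b => nfAdd (nf a) (nf b)
  | app a b => nfApp (nf a) (nf b)

@[simp]
theorem nfAdd_e (x : Tm) : nfAdd x e = x := by
  induction x <;> simp_all [nfAdd]

@[simp]
theorem nfAdd_eq_e_iff {x y : Tm} : nfAdd x y = e ↔ x = e ∧ y = e := by
  cases x <;> by_cases hy : y = e <;> simp [nfAdd, hy]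

theorem nfAdd_assoc (x y z : Tm) : nfAdd (nfAdd x y) z = nfAdd x (nfAdd y z) := by
  induction x with
  | e => rfl
  | add a b _ ih => simp only [nfAdd, ih]
  | d | app => by_cases hy : y = e <;> simp [nfAdd, hy]

theorem nfApp_nfAdd (x y z : Tm) : nfApp (nfAdd x y) z = nfApp y (nfApp x z) := by
  induction x generalizing z with
  | e => rfl
  | add a b _ ih => simp only [nfAdd, nfApp, ih]
  | d | app => by_cases hy : y = e <;> simp [nfAdd, nfApp, hy]

theorem nfApp_nfApp_d (x y : Tm) : nfApp (nfApp d x) y = nfApp x (nfAdd y x) := by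
  by_cases hx : x = e <;> simp [nfApp, hx]

theorem nf_eq_of_step {t u : Tm} (h : Step t u) : nf t = nf u := by
  induction h with
  | root h =>
    cases h <;> simp only [nf, nfAdd_e, nfAdd_assoc, nfApp_nfAdd, nfApp_nfApp_d] <;> rfl
  | addL _ ih | addR _ ih | appL _ ih | appR _ ih => simp only [nf, ih]

end Tm

namespace Steps

theorem add {a a' b b' : Tm} (ha : Steps a a') (hb : Steps b b') :
    Steps (Tm.add a b) (Tm.add a' b') :=
  (ha.lift (Tm.add · b) fun _ _ => Step.addL).trans (hb.lift (Tm.add a') fun _ _ => Step.addR)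

theorem app {a a' b b' : Tm} (ha : Steps a a') (hb : Steps b b') :
    Steps (Tm.app a b) (Tm.app a' b') :=
  (ha.lift (Tm.app · b) fun _ _ => Step.appL).trans (hb.lift (Tm.app a') fun _ _ => Step.appR)

theorem of_root {t u : Tm} (h : Root t u) : Steps t u :=
  .single (.root h)

end Steps

namespace Tm

theorem steps_nfAdd (x y : Tm) : Steps (add x y) (nfAdd x y) := by
  induction x with
  | e => exact .of_root (.eAdd y)
  | add a b _ ih => exact (Steps.of_root (.assoc a b y)).trans (Steps.add .refl ih)
  | d | app =>
    by_cases hy : y = e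
    · subst hy; exact .of_root (.addE _)
    · simp only [nfAdd, hy, if_false]; exact .refl

theorem steps_nfApp (x y : Tm) : Steps (app x y) (nfApp x y) := by
  induction x generalizing y with
  | e => exact .of_root (.appE y)
  | add a b iha ihb =>
    exact ((Steps.of_root (.appAdd a b y)).trans (Steps.app .refl (iha y))).trans (ihb _)
  | d =>
    by_cases hy : y = e
    · subst hy; exact .of_root .dE
    · simp only [nfApp, hy, if_false]; exact .refl
  | app p q _ ihq =>
    cases p
    case d =>
      exact ((Steps.of_root (.appD q y)).trans (Steps.app .refl (steps_nfAdd y q))).trans (ihq _)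
    all_goals exact .refl

theorem steps_nf (t : Tm) : Steps t (nf t) := by
  induction t with
  | d | e => exact .refl
  | add a b iha ihb => exact (Steps.add iha ihb).trans (steps_nfAdd _ _)
  | app a b iha ihb => exact (Steps.app iha ihb).trans (steps_nfApp _ _)

theorem termEq_iff_nf_eq {t u : Tm} : TermEq t u ↔ nf t = nf u := by
  refine ⟨fun h => congrArg (Quot.lift nf fun _ _ => nf_eq_of_step) (Quot.eqvGen_sound h),
    fun h => ?_⟩
  have ht : TermEq t (nf t) := Relation.EqvGen.reflTransGen_le_eqvGen Step _ _ (steps_nf t)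
  have hu : TermEq u (nf u) := Relation.EqvGen.reflTransGen_le_eqvGen Step _ _ (steps_nf u)
  exact ht.trans _ _ _ (h ▸ hu.symm)

end Tm

theorem SumOf.nf_eq_e_iff {t : Tm} {l : List Tm} (h : SumOf t l) :
    t.nf = e ↔ ∀ u ∈ l, u.nf = e := by
  induction h with
  | single => simp
  | node _ _ iha ihb => simp [Tm.nf, iha, ihb, or_imp, forall_and]

/-- if a sum of terms is provably equal to e,
then each summand is provably equal to e. -/
theorem sum_eq_e_implies_summands_eq_e :
    ∀ (t : Tm) (l : List Tm), SumOf t l → TermEq t e → ∀ u ∈ l, TermEq u e := by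
  intro t l hs ht
  simpa only [Tm.termEq_iff_nf_eq, Tm.nf] using hs.nf_eq_e_iff.mp (Tm.termEq_iff_nf_eq.mp ht)
end

section
/- (No cycles of length ≥ 2) Let n ≥ 2 and let t_0, …, t_{n-1} be distinct normal forms of the rewrite system R over {d, e, +, ·} such that t_i·e ≡ t_{i+1 mod n} for all i. Then a contradiction arises; i.e., there are no such cycles. -/
open Tm

/-! The rules strictly decrease `weight`, and all critical pairs join, so by Newman's lemma the
system is confluent: `s ≡ t` with `t` normal means `s →* t`. A normal application always has
the form `d · x`, and the normal form of `t · e` (`t` normal, `t ≠ e`) is `e` or such an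
application; `e` is a fixed point, so every member of a cycle is some `d · x`. Now
`(d · x) · e →* x · x`, where `x` contains no `e`, and rewriting an `e`-free term never lowers
its number of `d`s. Hence each turn of the cycle strictly raises the number of `d`s, except at
the fixed point `d · d`, which is impossible around a cycle of length `≥ 2`. -/

open Relation

theorem Relation.newman {α : Type*} {r : α → α → Prop} (hwf : WellFounded (flip r))
    (hlc : ∀ a b c, r a b → r a c → Join (ReflTransGen r) b c) {a b c : α}
    (hab : ReflTransGen r a b) (hac : ReflTransGen r a c) : Join (ReflTransGen r) b c := by
  induction a using hwf.induction generalizing b c with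
  | _ a ih =>
  rcases hab.cases_head with rfl | ⟨b₁, hab₁, hb₁b⟩
  · exact ⟨c, hac, .refl⟩
  rcases hac.cases_head with rfl | ⟨c₁, hac₁, hc₁c⟩
  · exact ⟨b, .refl, hab⟩
  obtain ⟨m, hb₁m, hc₁m⟩ := hlc a b₁ c₁ hab₁ hac₁
  obtain ⟨w, hbw, hmw⟩ := ih b₁ hab₁ hb₁b hb₁m
  obtain ⟨z, hwz, hcz⟩ := ih c₁ hac₁ (hc₁m.trans hmw) hc₁c
  exact ⟨z, hbw.trans hwz, hcz⟩

theorem WellFounded.exists_reflTransGen_irreducible {α : Type*} {r : α → α → Prop}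
    (hwf : WellFounded (flip r)) (a : α) : ∃ b, ReflTransGen r a b ∧ ∀ c, ¬ r b c := by
  induction a using hwf.induction with
  | _ a ih =>
  by_cases h : ∃ b, r a b
  · obtain ⟨b, hab⟩ := h
    obtain ⟨c, hbc, hc⟩ := ih b hab
    exact ⟨c, .head hab hbc, hc⟩
  · exact ⟨a, .refl, not_exists.mp h⟩

namespace Tm

def weight : Tm → ℕ
  | d => 2
  | e => 2
  | add a b => 2 * weight a + weight b + 1
  | app a b => weight b * 2 ^ weight a

lemma two_le_weight (t : Tm) : 2 ≤ weight t := by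
  induction t with
  | d | e => simp [weight]
  | add a b _ _ => simp only [weight]; omega
  | app a b _ ihb => exact ihb.trans (Nat.le_mul_of_pos_right _ (by positivity))

end Tm

open Tm

lemma Root.weight_lt {t u : Tm} (h : Root t u) : weight u < weight t := by
  cases h with
  | addE | eAdd | assoc => simp only [weight]; omega
  | appAdd x y z =>
    have := two_le_weight z
    have : 2 ^ weight x * 2 ^ weight y < 2 ^ (2 * weight x + weight y + 1) := by
      rw [← pow_add]; exact Nat.pow_lt_pow_right (by norm_num) (by omega)
    simp only [weight]; nlinarith
  | appD x y =>
    have := two_le_weight x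
    have := two_le_weight y
    have h2x : weight x + 3 ≤ 2 ^ (weight x + 2) := by
      have := Nat.lt_two_pow_self (n := weight x + 2); omega
    calc (2 * weight y + weight x + 1) * 2 ^ weight x
        < weight y * 2 ^ (weight x + 2) * 2 ^ weight x := by
          gcongr; nlinarith
      _ = weight y * 2 ^ (2 * weight x + 2) := by ring
      _ ≤ weight y * 2 ^ (weight x * 2 ^ 2) := by gcongr <;> norm_num; omega
  | appE =>
    have := two_le_weight u
    simp only [weight]; nlinarith
  | dE => simp [weight]

lemma Step.weight_lt {t u : Tm} (h : Step t u) : weight u < weight t := by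
  induction h with
  | root h => exact h.weight_lt
  | addL _ ih | addR _ ih => simp only [weight]; omega
  | @appL _ _ u _ ih =>
    simp only [weight]
    exact Nat.mul_lt_mul_of_pos_left (Nat.pow_lt_pow_right (by norm_num) ih)
      (by have := two_le_weight u; omega)
  | appR _ ih => simp only [weight]; exact Nat.mul_lt_mul_of_pos_right ih (by positivity)

lemma weight_lt_of_transGen {t u : Tm} (h : TransGen Step t u) : weight u < weight t := by
  induction h with
  | single s => exact s.weight_lt
  | tail _ s ih => exact s.weight_lt.trans ih

lemma wellFounded_flip_step : WellFounded (flip Step) :=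
  Subrelation.wf (fun h => Step.weight_lt h) (measure weight).wf

lemma steps_addL {a a' b : Tm} (h : ReflTransGen Step a a') :
    ReflTransGen Step (add a b) (add a' b) :=
  h.lift (add · b) fun _ _ => .addL

lemma steps_addR {a b b' : Tm} (h : ReflTransGen Step b b') :
    ReflTransGen Step (add a b) (add a b') :=
  h.lift (add a ·) fun _ _ => .addR

lemma steps_appL {a a' b : Tm} (h : ReflTransGen Step a a') :
    ReflTransGen Step (app a b) (app a' b) :=
  h.lift (app · b) fun _ _ => .appL

lemma steps_appR {a b b' : Tm} (h : ReflTransGen Step b b') :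
    ReflTransGen Step (app a b) (app a b') :=
  h.lift (app a ·) fun _ _ => .appR

lemma not_step_d {u : Tm} : ¬ Step d u := by
  rintro (⟨⟨⟩⟩)

lemma not_step_e {u : Tm} : ¬ Step e u := by
  rintro (⟨⟨⟩⟩)

lemma Root.join_of_step {t u v : Tm} (r : Root t u) (s : Step t v) :
    Join (ReflTransGen Step) u v := by
  cases r with
  | addE x =>
    rcases s with ⟨⟨⟩⟩ | s | s
    · exact ⟨_, .refl, .refl⟩
    · exact ⟨_, .refl, .refl⟩
    · exact ⟨_, .refl, .single (.addR (.root (.addE _)))⟩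
    · exact ⟨_, .single s, .single (.root (.addE _))⟩
    · exact absurd s not_step_e
  | eAdd x =>
    rcases s with ⟨⟨⟩⟩ | s | s
    · exact ⟨_, .refl, .refl⟩
    · exact ⟨_, .refl, .refl⟩
    · exact absurd s not_step_e
    · exact ⟨_, .single s, .single (.root (.eAdd _))⟩
  | assoc x y z =>
    rcases s with ⟨⟨⟩⟩ | s | s
    · exact ⟨_, .single (.addR (.root (.addE _))), .refl⟩
    · exact ⟨_, .refl, .refl⟩
    · rcases s with ⟨⟨⟩⟩ | s | s
      · exact ⟨_, .single (.addR (.root (.eAdd _))), .refl⟩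
      · exact ⟨_, .single (.root (.eAdd _)), .refl⟩
      · exact ⟨_, .single (.root (.assoc _ _ _)),
          .head (.root (.assoc _ _ _)) (.single (.addR (.root (.assoc _ _ _))))⟩
      · exact ⟨_, .single (.addL s), .single (.root (.assoc _ _ _))⟩
      · exact ⟨_, .single (.addR (.addL s)), .single (.root (.assoc _ _ _))⟩
    · exact ⟨_, .single (.addR (.addR s)), .single (.root (.assoc _ _ _))⟩
  | appAdd x y z =>
    rcases s with ⟨⟨⟩⟩ | _ | _ | s | s
    · exact ⟨_, .refl, .refl⟩
    · rcases s with ⟨⟨⟩⟩ | s | s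
      · exact ⟨_, .single (.root (.appE _)), .refl⟩
      · exact ⟨_, .single (.appR (.root (.appE _))), .refl⟩
      · exact ⟨_, .single (.appR (.root (.appAdd _ _ _))),
          .head (.root (.appAdd _ _ _)) (.single (.root (.appAdd _ _ _)))⟩
      · exact ⟨_, .single (.appR (.appL s)), .single (.root (.appAdd _ _ _))⟩
      · exact ⟨_, .single (.appL s), .single (.root (.appAdd _ _ _))⟩
    · exact ⟨_, .single (.appR (.appR s)), .single (.root (.appAdd _ _ _))⟩
  | appD x y =>
    rcases s with ⟨⟨⟩⟩ | _ | _ | s | s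
    · exact ⟨_, .refl, .refl⟩
    · rcases s with ⟨⟨⟩⟩ | _ | _ | s | s
      · exact ⟨_, .head (.root (.appE _)) (.single (.root (.addE _))), .single (.root (.appE _))⟩
      · exact absurd s not_step_d
      · exact ⟨_, .head (.appL s) (.single (.appR (.addR s))), .single (.root (.appD _ _))⟩
    · exact ⟨_, .single (.appR (.addL s)), .single (.root (.appD _ _))⟩
  | appE x =>
    rcases s with ⟨⟨⟩⟩ | _ | _ | s | s
    · exact ⟨_, .refl, .refl⟩
    · exact absurd s not_step_e
    · exact ⟨_, .single s, .single (.root (.appE _))⟩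
  | dE =>
    rcases s with ⟨⟨⟩⟩ | _ | _ | s | s
    · exact ⟨_, .refl, .refl⟩
    · exact absurd s not_step_d
    · exact absurd s not_step_e

lemma Step.join {t u v : Tm} (h₁ : Step t u) (h₂ : Step t v) : Join (ReflTransGen Step) u v := by
  induction h₁ generalizing v with
  | root r => exact r.join_of_step h₂
  | addL s₁ ih =>
    rcases h₂ with ⟨r⟩ | s₂ | s₂
    · exact symm (r.join_of_step (.addL s₁))
    · obtain ⟨w, h₁, h₂⟩ := ih s₂; exact ⟨_, steps_addL h₁, steps_addL h₂⟩
    · exact ⟨_, .single (.addR s₂), .single (.addL s₁)⟩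
  | addR s₁ ih =>
    rcases h₂ with ⟨r⟩ | s₂ | s₂
    · exact symm (r.join_of_step (.addR s₁))
    · exact ⟨_, .single (.addL s₂), .single (.addR s₁)⟩
    · obtain ⟨w, h₁, h₂⟩ := ih s₂; exact ⟨_, steps_addR h₁, steps_addR h₂⟩
  | appL s₁ ih =>
    rcases h₂ with ⟨r⟩ | _ | _ | s₂ | s₂
    · exact symm (r.join_of_step (.appL s₁))
    · obtain ⟨w, h₁, h₂⟩ := ih s₂; exact ⟨_, steps_appL h₁, steps_appL h₂⟩
    · exact ⟨_, .single (.appR s₂), .single (.appL s₁)⟩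
  | appR s₁ ih =>
    rcases h₂ with ⟨r⟩ | _ | _ | s₂ | s₂
    · exact symm (r.join_of_step (.appR s₁))
    · exact ⟨_, .single (.appL s₂), .single (.appR s₁)⟩
    · obtain ⟨w, h₁, h₂⟩ := ih s₂; exact ⟨_, steps_appR h₁, steps_appR h₂⟩

lemma confluent {a b c : Tm} (hab : ReflTransGen Step a b) (hac : ReflTransGen Step a c) :
    Join (ReflTransGen Step) b c :=
  newman wellFounded_flip_step (fun _ _ _ => Step.join) hab hac

lemma exists_normalForm (t : Tm) : ∃ r, ReflTransGen Step t r ∧ NormalForm r :=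
  wellFounded_flip_step.exists_reflTransGen_irreducible t

lemma NormalForm.eq_of_steps {a b : Tm} (ha : NormalForm a) (h : ReflTransGen Step a b) :
    b = a := by
  rcases h.cases_head with rfl | ⟨c, hc, -⟩
  · rfl
  · exact absurd hc (ha c)

lemma steps_to_normalForm {t w r : Tm} (h : ReflTransGen Step t r) (hr : NormalForm r)
    (hw : ReflTransGen Step t w) : ReflTransGen Step w r := by
  obtain ⟨c, hwc, hrc⟩ := confluent hw h
  rwa [hr.eq_of_steps hrc] at hwc

lemma normalForm_unique {t r r' : Tm} (h : ReflTransGen Step t r) (h' : ReflTransGen Step t r')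
    (hr : NormalForm r) (hr' : NormalForm r') : r = r' :=
  hr'.eq_of_steps (steps_to_normalForm h hr h')

lemma TermEq.steps_of_normalForm {a b : Tm} (h : TermEq a b) (hb : NormalForm b) :
    ReflTransGen Step a b := by
  have hequiv : Equivalence (Join (ReflTransGen Step)) :=
    equivalence_join fun _ _ _ => confluent
  obtain ⟨c, hac, hbc⟩ :=
    hequiv.eqvGen_iff.mp (EqvGen.mono (fun _ _ hs => ⟨_, .single hs, .refl⟩) _ _ h)
  rwa [hb.eq_of_steps hbc] at hac

lemma normalForm_e : NormalForm e := fun _ => not_step_e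

lemma NormalForm.of_add {a b : Tm} (h : NormalForm (add a b)) :
    NormalForm a ∧ NormalForm b ∧ a ≠ e ∧ b ≠ e :=
  ⟨fun _ s => h _ (.addL s), fun _ s => h _ (.addR s),
    by rintro rfl; exact h _ (.root (.eAdd b)), by rintro rfl; exact h _ (.root (.addE a))⟩

lemma NormalForm.eq_d_of_app {a b : Tm} (h : NormalForm (app a b)) : a = d := by
  induction a generalizing b with
  | d => rfl
  | e => exact absurd (.root (.appE b)) (h _)
  | add x y => exact absurd (.root (.appAdd x y b)) (h _)
  | app p q ihp _ =>
    obtain rfl := ihp fun _ s => h _ (.appL s)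
    exact absurd (.root (.appD q b)) (h _)

lemma normalForm_app_iff {a b : Tm} : NormalForm (app a b) ↔ a = d ∧ NormalForm b ∧ b ≠ e := by
  constructor
  · intro h
    obtain rfl := h.eq_d_of_app
    exact ⟨rfl, fun _ s => h _ (.appR s), by rintro rfl; exact h _ (.root .dE)⟩
  · rintro ⟨rfl, hb, hbe⟩ u (⟨⟨⟩⟩ | _ | _ | s | s)
    · exact hbe rfl
    · exact not_step_d s
    · exact hb _ s

lemma eq_e_or_app_d_of_steps_app {u v r : Tm} (hu : NormalForm u) (hue : u ≠ e)
    (hv : NormalForm v) (h : ReflTransGen Step (app u v) r) (hr : NormalForm r) :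
    r = e ∨ ∃ x, r = app d x := by
  induction hw : weight (app u v) using Nat.strong_induction_on generalizing u v with
  | _ w ih =>
  cases u with
  | e => exact absurd rfl hue
  | d =>
    by_cases hve : v = e
    · subst hve
      exact .inl (normalForm_unique h (.single (.root .dE)) hr normalForm_e)
    · exact .inr ⟨v, (normalForm_app_iff.2 ⟨rfl, hv, hve⟩).eq_of_steps h⟩
  | add a b =>
    obtain ⟨-, hb, -, hbe⟩ := hu.of_add
    obtain ⟨r₁, h₁, hr₁⟩ := exists_normalForm (app a v)
    have hstep : TransGen Step (app (add a b) v) (app b r₁) :=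
      .head' (.root (.appAdd a b v)) (steps_appR h₁)
    exact ih _ (hw ▸ weight_lt_of_transGen hstep) hb hbe hr₁
      (steps_to_normalForm h hr hstep.to_reflTransGen) rfl
  | app p q =>
    obtain ⟨rfl, hq, hqe⟩ := normalForm_app_iff.1 hu
    obtain ⟨s, hs, hs'⟩ := exists_normalForm (add v q)
    have hstep : TransGen Step (app (app d q) v) (app q s) :=
      .head' (.root (.appD q v)) (steps_appR hs)
    exact ih _ (hw ▸ weight_lt_of_transGen hstep) hq hqe hs'
      (steps_to_normalForm h hr hstep.to_reflTransGen) rfl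

namespace Tm

def EFree : Tm → Prop
  | d => True
  | e => False
  | add a b | app a b => EFree a ∧ EFree b

def dCount : Tm → ℕ
  | d => 1
  | e => 0
  | add a b | app a b => dCount a + dCount b

lemma EFree.one_le_dCount {t : Tm} (h : EFree t) : 1 ≤ dCount t := by
  induction t with
  | d => simp [dCount]
  | e => exact h.elim
  | add a b iha _ | app a b iha _ => have := iha h.1; simp only [dCount]; omega

lemma EFree.two_le_dCount {t : Tm} (h : EFree t) (hd : t ≠ d) : 2 ≤ dCount t := by
  cases t with
  | d => exact absurd rfl hd
  | e => exact h.elim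
  | add a b | app a b =>
    have := h.1.one_le_dCount
    have := h.2.one_le_dCount
    simp only [dCount]; omega

end Tm

lemma NormalForm.eFree {t : Tm} (h : NormalForm t) (he : t ≠ e) : EFree t := by
  induction t with
  | d => trivial
  | e => exact he rfl
  | add a b iha ihb =>
    obtain ⟨ha, hb, hae, hbe⟩ := h.of_add
    exact ⟨iha ha hae, ihb hb hbe⟩
  | app a b _ ihb =>
    obtain ⟨rfl, hb, hbe⟩ := normalForm_app_iff.1 h
    exact ⟨trivial, ihb hb hbe⟩

/-- Only `assoc`, `appAdd` and `appD` fire on `e`-free terms, and `appD` duplicates an `x`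
containing a `d`. -/
lemma Step.eFree_and_dCount_le {t u : Tm} (h : Step t u) (ht : EFree t) :
    EFree u ∧ dCount t ≤ dCount u := by
  induction h with
  | root r =>
    cases r with
    | addE | eAdd | appE | dE => simp [EFree] at ht
    | assoc | appAdd => simp only [EFree, dCount] at ht ⊢; exact ⟨by tauto, by omega⟩
    | appD x y =>
      have := ht.1.2.one_le_dCount
      simp only [EFree, dCount] at ht ⊢; exact ⟨by tauto, by omega⟩
  | addL _ ih | addR _ ih | appL _ ih | appR _ ih =>
    simp only [EFree, dCount] at ht ⊢; grind

lemma eFree_and_dCount_le_of_steps {t u : Tm} (h : ReflTransGen Step t u) (ht : EFree t) :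
    EFree u ∧ dCount t ≤ dCount u := by
  induction h with
  | refl => exact ⟨ht, le_rfl⟩
  | tail _ s ih =>
    obtain ⟨hu, hle⟩ := s.eFree_and_dCount_le ih.1
    exact ⟨hu, ih.2.trans hle⟩

lemma dCount_lt_of_steps_app_e {x t : Tm} (hx : NormalForm (app d x))
    (h : ReflTransGen Step (app (app d x) e) t) (ht : NormalForm t) (hne : t ≠ app d x) :
    dCount (app d x) < dCount t := by
  obtain ⟨-, hxn, hxe⟩ := normalForm_app_iff.1 hx
  have hxx : ReflTransGen Step (app (app d x) e) (app x x) :=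
    .head (.root (.appD x e)) (.single (.appR (.root (.eAdd x))))
  have hxfree := hxn.eFree hxe
  by_cases hxd : x = d
  · subst hxd
    exact absurd (normalForm_unique h hxx ht hx) hne
  · have := (eFree_and_dCount_le_of_steps (steps_to_normalForm h ht hxx) ⟨hxfree, hxfree⟩).2
    have := hxfree.two_le_dCount hxd
    simp only [dCount] at *; omega

lemma no_periodic_orbit {n : ℕ} (hn : 0 < n) (T : ℕ → Tm) (hper : ∀ k, T (k + n) = T k)
    (hne : ∀ k, T (k + 1) ≠ T k) (hnf : ∀ k, NormalForm (T k))
    (hstep : ∀ k, ReflTransGen Step (app (T k) e) (T (k + 1))) : False := by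
  have hT_ne_e : ∀ k, T k ≠ e := fun k hk => hne k <| by
    rw [hk]
    exact normalForm_unique (hk ▸ hstep k) (.single (.root (.appE e))) (hnf _) normalForm_e
  have hT_app : ∀ k, ∃ x, T (k + 1) = app d x := fun k =>
    (eq_e_or_app_d_of_steps_app (hnf k) (hT_ne_e k) normalForm_e (hstep k) (hnf _)).resolve_left
      (hT_ne_e _)
  have hmono : StrictMono fun k => dCount (T (k + 1)) := strictMono_nat_of_lt_succ fun k => by
    obtain ⟨x, hx⟩ := hT_app k
    have := dCount_lt_of_steps_app_e (hx ▸ hnf (k + 1)) (hx ▸ hstep (k + 1)) (hnf _)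
      (hx ▸ hne (k + 1))
    rwa [← hx] at this
  have := hmono hn
  simp only [zero_add, add_comm n 1, hper] at this
  exact lt_irrefl _ this

/-- no cycles of length ≥ 2: there are no cycles of distinct
normal forms t_0, …, t_{n-1} (n ≥ 2) with t_i·e ≡ t_{i+1 mod n}. -/
theorem no_cycles :
    ∀ n : ℕ, (hn : 2 ≤ n) → ∀ t : Fin n → Tm,
      (∀ i, NormalForm (t i)) → Function.Injective t →
      (∀ i : Fin n, TermEq (app (t i) e) (t ⟨(i.val + 1) % n, Nat.mod_lt _ (by omega)⟩)) →
      False := by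
  intro n hn t hnf hinj hcyc
  let T : ℕ → Tm := fun k => t ⟨k % n, Nat.mod_lt _ (by omega)⟩
  refine no_periodic_orbit (n := n) (by omega) T (fun k => by simp [T]) ?_ (fun _ => hnf _) ?_
  · intro k h
    have h' : k + 1 ≡ k + 0 [MOD n] := congrArg Fin.val (hinj h)
    have := Nat.le_of_dvd one_pos (Nat.modEq_zero_iff_dvd.1 (h'.add_left_cancel' k))
    omega
  · intro k
    simpa [T, Nat.mod_add_mod] using (hcyc ⟨k % n, _⟩).steps_of_normalForm (hnf _)
end
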